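/- Dual variable boundedness: Suppose q_t ∈ ℝ^m_+ satisfies q_0 = 0 and q_t = [q_{t−1} + γ_t(b_t − β_t q_{t−1})]₊, where γ_t, β_t > 0. If 0 < γ_t β_t ≤ 1 and ‖b_t‖ ≤ F̃ for all t, and γ_t/β_t is bounded so that γ_t F̃ ≤ (F̃/β_t)·γ_t β_t, and β_t is non-increasing, then ‖q_t‖ ≤ F̃/β_t for all t. -/

import Mathlib

lemma pos_part_norm_le {m : ℕ} (v w : EuclideanSpace ℝ (Fin m))
    (hw : ∀ i, w i = max (v i) 0) : ‖w‖ ≤ ‖v‖ := by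
  rw [EuclideanSpace.norm_eq, EuclideanSpace.norm_eq]
  simp only [hw]
  apply Real.sqrt_le_sqrt
  apply Finset.sum_le_sum
  intro i _
  have h : |max (v i) 0| ≤ |v i| := by
    rw [abs_of_nonneg (le_max_right _ _)]
    exact max_le (le_abs_self _) (abs_nonneg _)
  simpa [Real.norm_eq_abs] using pow_le_pow_left₀ (abs_nonneg _) h 2

/-- Dual variable boundedness: the projected dual iterates with regularization `β t`
satisfy `‖q t‖ ≤ F̃ / β t`. -/
theorem stmt_7 (m : ℕ) (Ftil : ℝ) (hF : 0 ≤ Ftil)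
    (q b : ℕ → EuclideanSpace ℝ (Fin m)) (γ β : ℕ → ℝ)
    (hq0 : q 0 = 0)
    (hrec : ∀ t, 1 ≤ t →
      q t = (WithLp.toLp 2 (fun i => max ((q (t - 1) + γ t • (b t - β t • q (t - 1))) i) 0) :
        EuclideanSpace ℝ (Fin m)))
    (hb : ∀ t, ‖b t‖ ≤ Ftil)
    (hγβ : ∀ t, 0 < γ t * β t ∧ γ t * β t ≤ 1)
    (hβpos : ∀ t, 0 < β t)
    (hβmono : ∀ t, β (t + 1) ≤ β t) :
    ∀ t, 1 ≤ t → ‖q t‖ ≤ Ftil / β t := by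
  have key : ∀ t, ‖q t‖ ≤ Ftil / β t := by
    intro t
    induction t with
    | zero =>
      rw [hq0, norm_zero]
      exact div_nonneg hF (hβpos 0).le
    | succ n ih =>
      have hβn := hβpos n
      have hβn1 := hβpos (n + 1)
      have hγβ1 := hγβ (n + 1)
      have hγpos : 0 < γ (n + 1) := by nlinarith [hγβ1.1]
      have hrec' := hrec (n + 1) (by omega)
      simp only [Nat.add_sub_cancel] at hrec'
      have h1 : ‖q (n + 1)‖ ≤ ‖q n + γ (n + 1) • (b (n + 1) - β (n + 1) • q n)‖ := by
        exact pos_part_norm_le _ _ (fun i => congrArg (fun v : EuclideanSpace ℝ (Fin m) => v i) hrec')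
      have h2 : q n + γ (n + 1) • (b (n + 1) - β (n + 1) • q n)
          = (1 - γ (n + 1) * β (n + 1)) • q n + γ (n + 1) • b (n + 1) := by
        simp [smul_sub, sub_smul, smul_smul, one_smul]
        abel
      have hqn : ‖q n‖ ≤ Ftil / β (n + 1) := by
        refine ih.trans ?_
        gcongr
        exact hβmono n
      have h3 : ‖q (n + 1)‖ ≤ (1 - γ (n + 1) * β (n + 1)) * ‖q n‖ + γ (n + 1) * ‖b (n + 1)‖ := by
        rw [h2] at h1
        refine h1.trans ?_
        refine (norm_add_le _ _).trans ?_
        rw [norm_smul, norm_smul, Real.norm_eq_abs, Real.norm_eq_abs,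
          abs_of_nonneg (by linarith [hγβ1.2]), abs_of_nonneg hγpos.le]
      have h4 : (1 - γ (n + 1) * β (n + 1)) * (Ftil / β (n + 1)) + γ (n + 1) * Ftil
          = Ftil / β (n + 1) := by
        field_simp
        ring
      have hcoef : 0 ≤ 1 - γ (n + 1) * β (n + 1) := by linarith [hγβ1.2]
      calc ‖q (n + 1)‖ ≤ (1 - γ (n + 1) * β (n + 1)) * ‖q n‖ + γ (n + 1) * ‖b (n + 1)‖ := h3
        _ ≤ (1 - γ (n + 1) * β (n + 1)) * (Ftil / β (n + 1)) + γ (n + 1) * Ftil := by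
            gcongr
            exact hb (n + 1)
        _ = Ftil / β (n + 1) := h4
  exact fun t _ => key t
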